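/- Suppose Ψ ∈ GL_r(𝕋_s{z/θ}) satisfies Ψ^{(−1)} = ΦΨ for the matrix Φ of a rank-r Drinfeld A[t_s]-module with A_r ∈ 𝕋_s^×. Then the solution set V_φ = { g ∈ Mat_{1×r}(𝕋_s{z/θ}) : g^{(−1)}Φ = g } equals Mat_{1×r}(𝔽_q[t_1,…,t_s,z])·Ψ^{−1}; in particular V_φ is a free 𝔽_q[t_1,…,t_s,z]-module of rank r. -/

import Mathlib

open Filter

noncomputable section

/-- Membership in the Tate algebra `𝕋_s` over `K`: the coefficients tend to `0`
(for every `ε > 0` only finitely many coefficients have norm `≥ ε`). -/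
def IsTate (K : Type) [NontriviallyNormedField K] (s : ℕ)
    (f : MvPowerSeries (Fin s) K) : Prop :=
  ∀ ε : ℝ, 0 < ε → {ν : Fin s →₀ ℕ | ε ≤ ‖MvPowerSeries.coeff ν f‖}.Finite

/-- The Gauss norm `‖f‖_∞ = sup_ν |a_ν|` on the Tate algebra. -/
def gaussNorm (K : Type) [NontriviallyNormedField K] (s : ℕ)
    (f : MvPowerSeries (Fin s) K) : ℝ :=
  ⨆ ν : Fin s →₀ ℕ, ‖MvPowerSeries.coeff ν f‖

/-- The coefficient-wise twist of a power series induced by a ring endomorphism of `K`. -/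
def twPS (K : Type) [NontriviallyNormedField K] (s : ℕ) (τK : K →+* K) :
    MvPowerSeries (Fin s) K →+* MvPowerSeries (Fin s) K :=
  MvPowerSeries.map τK

/-- Membership in `𝕋_s{z/θ}`: a power series `Σ a_i z^i` over `𝕋_s` with
`‖θ‖^i ‖a_i‖_∞ → 0`, i.e. converging for `|z|_∞ ≤ |θ|_∞`. -/
def IsTateZtheta (K : Type) [NontriviallyNormedField K] (s : ℕ) (θ : K)
    (f : PowerSeries (MvPowerSeries (Fin s) K)) : Prop :=
  (∀ i : ℕ, IsTate K s (PowerSeries.coeff i f)) ∧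
  Filter.Tendsto (fun i : ℕ => ‖θ‖ ^ i * gaussNorm K s (PowerSeries.coeff i f))
    Filter.atTop (nhds 0)

/-- Membership in `𝔽_q[t_1,…,t_s,z]` inside power series over `𝕋_s`: finitely many
nonzero `z`-coefficients, each a polynomial in `t_1,…,t_s` with coefficients in `𝔽_q`
(fixed by the `q`-power map). -/
def IsFqPolyZ (K : Type) [NontriviallyNormedField K] (s q : ℕ)
    (f : PowerSeries (MvPowerSeries (Fin s) K)) : Prop :=
  {i : ℕ | PowerSeries.coeff i f ≠ 0}.Finite ∧
  (∀ i : ℕ, {ν : Fin s →₀ ℕ |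
      MvPowerSeries.coeff ν (PowerSeries.coeff i f) ≠ 0}.Finite) ∧
  (∀ (i : ℕ) (ν : Fin s →₀ ℕ),
      (MvPowerSeries.coeff ν (PowerSeries.coeff i f)) ^ q
        = MvPowerSeries.coeff ν (PowerSeries.coeff i f))

/-- The companion matrix `Φ` with entries in `𝕋_s[z] ⊆ 𝕋_s{z/θ}` (power-series model). -/
def PhiMatZ (K : Type) [NontriviallyNormedField K] (s : ℕ) (τK : K ≃+* K) (r : ℕ) (θ : K)
    (A : ℕ → MvPowerSeries (Fin s) K) (uinv : MvPowerSeries (Fin s) K) :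
    Matrix (Fin r) (Fin r) (PowerSeries (MvPowerSeries (Fin s) K)) :=
  fun i j =>
    if (i : ℕ) + 1 < r then (if (j : ℕ) = (i : ℕ) + 1 then 1 else 0)
    else
      if (j : ℕ) = 0 then
        (PowerSeries.X - PowerSeries.C (MvPowerSeries.C (σ := Fin s) (R := K) θ))
          * PowerSeries.C uinv
      else
        - (PowerSeries.C
            ((⇑(twPS K s (τK.symm : K ≃+* K).toRingHom))^[(j : ℕ)] (A j))
          * PowerSeries.C uinv)

/-!
Since `Ψ` is invertible, `g ↦ gΨ` is a bijection on row vectors, and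
`(gΨ)^{(-1)} = g^{(-1)} Ψ^{(-1)} = (g^{(-1)} Φ) Ψ`, so `g` solves `g^{(-1)} Φ = g` exactly when
`gΨ` is fixed by the twist. The coefficients `a` of a twist-fixed series satisfy `a ^ q = a`,
so the nonzero ones have norm `1`. For `gΨ ∈ 𝕋_s{z/θ}` (a ring, by the ultrametric
inequality) the decay of the coefficients together with `‖θ‖ ≥ 1` then leaves only finitely
many of them, i.e. `gΨ` has entries in `𝔽_q[t_1,…,t_s,z]`.
-/

open scoped Matrix

section TateAlgebra

variable {K : Type} [NontriviallyNormedField K] {s : ℕ} {f g : MvPowerSeries (Fin s) K}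

theorem isTate_iff_tendsto :
    IsTate K s f ↔ Tendsto (fun ν => ‖MvPowerSeries.coeff ν f‖) cofinite (nhds 0) := by
  simp only [Metric.tendsto_nhds, eventually_cofinite, Real.dist_eq, sub_zero, abs_norm, not_lt]
  rfl

theorem isTate_iff_isRestricted : IsTate K s f ↔ MvPowerSeries.IsRestricted (fun _ => 1) f := by
  simp [isTate_iff_tendsto, MvPowerSeries.IsRestricted]

theorem IsTate.bddAbove (hf : IsTate K s f) :
    BddAbove (Set.range fun ν => ‖MvPowerSeries.coeff ν f‖) :=
  (isTate_iff_tendsto.1 hf).bddAbove_range_of_cofinite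

theorem gaussNorm_nonneg (f : MvPowerSeries (Fin s) K) : 0 ≤ gaussNorm K s f :=
  Real.iSup_nonneg fun _ => norm_nonneg _

theorem IsTate.norm_coeff_le_gaussNorm (hf : IsTate K s f) (ν : Fin s →₀ ℕ) :
    ‖MvPowerSeries.coeff ν f‖ ≤ gaussNorm K s f :=
  le_ciSup hf.bddAbove ν

theorem mul_gaussNorm_le {t C : ℝ} (ht : 0 ≤ t)
    (h : ∀ ν, t * ‖MvPowerSeries.coeff ν f‖ ≤ C) : t * gaussNorm K s f ≤ C := by
  rw [gaussNorm, Real.mul_iSup_of_nonneg ht]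
  exact Real.iSup_le h ((mul_nonneg ht (norm_nonneg _)).trans (h 0))

theorem gaussNorm_le {C : ℝ} (h : ∀ ν, ‖MvPowerSeries.coeff ν f‖ ≤ C) :
    gaussNorm K s f ≤ C := by
  simpa using mul_gaussNorm_le zero_le_one (by simpa using h)

theorem gaussNorm_zero : gaussNorm K s 0 = 0 := by
  simp [gaussNorm]

theorem gaussNorm_neg : gaussNorm K s (-f) = gaussNorm K s f := by
  simp [gaussNorm]

theorem IsTate.gaussNorm_add_le (hf : IsTate K s f) (hg : IsTate K s g) :
    gaussNorm K s (f + g) ≤ gaussNorm K s f + gaussNorm K s g :=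
  gaussNorm_le fun ν =>
    (map_add (MvPowerSeries.coeff ν) f g ▸ norm_add_le _ _).trans
      (add_le_add (hf.norm_coeff_le_gaussNorm ν) (hg.norm_coeff_le_gaussNorm ν))

variable [IsUltrametricDist K]

theorem IsTate.gaussNorm_mul_le (hf : IsTate K s f) (hg : IsTate K s g) :
    gaussNorm K s (f * g) ≤ gaussNorm K s f * gaussNorm K s g := by
  refine gaussNorm_le fun ν => ?_
  rw [MvPowerSeries.coeff_mul]
  refine IsUltrametricDist.norm_sum_le_of_forall_le_of_nonneg
    (mul_nonneg (gaussNorm_nonneg f) (gaussNorm_nonneg g)) fun p _ => ?_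
  exact (norm_mul_le _ _).trans (mul_le_mul (hf.norm_coeff_le_gaussNorm p.1)
    (hg.norm_coeff_le_gaussNorm p.2) (norm_nonneg _) (gaussNorm_nonneg f))

variable (K s) in
def tateAlgebra : Subring (MvPowerSeries (Fin s) K) :=
  MvPowerSeries.IsRestricted.subring fun _ => 1

theorem mem_tateAlgebra : f ∈ tateAlgebra K s ↔ IsTate K s f :=
  isTate_iff_isRestricted.symm

theorem IsTate.mul (hf : IsTate K s f) (hg : IsTate K s g) : IsTate K s (f * g) :=
  mem_tateAlgebra.1 (mul_mem (mem_tateAlgebra.2 hf) (mem_tateAlgebra.2 hg))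

end TateAlgebra

section TateZtheta

open Finset.HasAntidiagonal

variable {K : Type} [NontriviallyNormedField K] {s : ℕ} {θ : K}
  {f g : PowerSeries (MvPowerSeries (Fin s) K)}

theorem IsTateZtheta.of_finite_support (hf : ∀ i, IsTate K s (PowerSeries.coeff i f))
    (hfin : {i | PowerSeries.coeff i f ≠ 0}.Finite) : IsTateZtheta K s θ f := by
  refine ⟨hf, tendsto_const_nhds.congr' ?_⟩
  rw [← Nat.cofinite_eq_atTop]
  filter_upwards [hfin.compl_mem_cofinite] with i hi
  simp_all [gaussNorm_zero]

variable [IsUltrametricDist K]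

theorem IsTateZtheta.neg (hf : IsTateZtheta K s θ f) : IsTateZtheta K s θ (-f) := by
  refine ⟨fun i => ?_, by simpa [gaussNorm_neg] using hf.2⟩
  rw [map_neg, ← mem_tateAlgebra]
  exact neg_mem (mem_tateAlgebra.2 (hf.1 i))

theorem IsTateZtheta.add (hf : IsTateZtheta K s θ f) (hg : IsTateZtheta K s θ g) :
    IsTateZtheta K s θ (f + g) := by
  refine ⟨fun i => ?_, ?_⟩
  · rw [map_add, ← mem_tateAlgebra]
    exact add_mem (mem_tateAlgebra.2 (hf.1 i)) (mem_tateAlgebra.2 (hg.1 i))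
  · refine squeeze_zero (fun i => mul_nonneg (by positivity) (gaussNorm_nonneg _)) (fun i => ?_)
      (by simpa using hf.2.add hg.2)
    rw [map_add, ← mul_add]
    exact mul_le_mul_of_nonneg_left ((hf.1 i).gaussNorm_add_le (hg.1 i)) (by positivity)

theorem IsTate.coeff_mul (hf : ∀ i, IsTate K s (PowerSeries.coeff i f))
    (hg : ∀ i, IsTate K s (PowerSeries.coeff i g)) (i : ℕ) :
    IsTate K s (PowerSeries.coeff i (f * g)) := by
  rw [PowerSeries.coeff_mul, ← mem_tateAlgebra]
  exact sum_mem fun p _ => mul_mem (mem_tateAlgebra.2 (hf p.1)) (mem_tateAlgebra.2 (hg p.2))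

theorem pow_mul_gaussNorm_coeff_mul_le (hf : ∀ i, IsTate K s (PowerSeries.coeff i f))
    (hg : ∀ i, IsTate K s (PowerSeries.coeff i g)) (i : ℕ) :
    ‖θ‖ ^ i * gaussNorm K s (PowerSeries.coeff i (f * g)) ≤
      (antidiagonal i).sup' (nonempty_antidiagonal i) fun p =>
        (‖θ‖ ^ p.1 * gaussNorm K s (PowerSeries.coeff p.1 f)) *
          (‖θ‖ ^ p.2 * gaussNorm K s (PowerSeries.coeff p.2 g)) := by
  have hne := nonempty_antidiagonal i
  refine mul_gaussNorm_le (by positivity) fun ν => ?_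
  rw [PowerSeries.coeff_mul, map_sum, mul_comm]
  grw [hne.norm_sum_le_sup'_norm, Finset.sup'_mul₀ (by positivity)]
  refine Finset.sup'_mono_fun fun p hp => ?_
  rw [← mem_antidiagonal.mp hp, pow_add, mul_mul_mul_comm, mul_comm]
  refine mul_le_mul_of_nonneg_left ?_ (by positivity)
  exact ((hf p.1).mul (hg p.2)).norm_coeff_le_gaussNorm ν |>.trans
    ((hf p.1).gaussNorm_mul_le (hg p.2))

theorem IsTateZtheta.mul (hf : IsTateZtheta K s θ f) (hg : IsTateZtheta K s θ g) :
    IsTateZtheta K s θ (f * g) := by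
  obtain ⟨hfT, hf⟩ := hf
  obtain ⟨hgT, hg⟩ := hg
  refine ⟨IsTate.coeff_mul hfT hgT, ?_⟩
  rw [← Nat.cofinite_eq_atTop] at hf hg ⊢
  exact squeeze_zero (fun i => mul_nonneg (by positivity) (gaussNorm_nonneg _))
    (pow_mul_gaussNorm_coeff_mul_le hfT hgT)
    (tendsto_sup'_antidiagonal_cofinite (tendsto_mul_cofinite_nhds_zero hf hg))

theorem IsTateZtheta.zero : IsTateZtheta K s θ 0 :=
  .of_finite_support (fun i => by simp [← mem_tateAlgebra]) (by simp)

theorem IsTateZtheta.one : IsTateZtheta K s θ 1 := by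
  refine .of_finite_support (fun i => ?_) ((Set.finite_singleton 0).subset fun i hi => ?_)
  · rw [PowerSeries.coeff_one, ← mem_tateAlgebra]
    split_ifs
    exacts [one_mem _, zero_mem _]
  · by_contra h
    simp_all [PowerSeries.coeff_one]

variable (K s θ) in
def tateZtheta : Subring (PowerSeries (MvPowerSeries (Fin s) K)) where
  carrier := {f | IsTateZtheta K s θ f}
  zero_mem' := IsTateZtheta.zero
  one_mem' := IsTateZtheta.one
  add_mem' := IsTateZtheta.add
  neg_mem' := IsTateZtheta.neg
  mul_mem' := IsTateZtheta.mul

theorem IsTateZtheta.vecMul {m n : Type*} [Fintype n]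
    {v : n → PowerSeries (MvPowerSeries (Fin s) K)}
    {M : Matrix n m (PowerSeries (MvPowerSeries (Fin s) K))} (hv : ∀ i, IsTateZtheta K s θ (v i))
    (hM : ∀ i j, IsTateZtheta K s θ (M i j)) (j : m) : IsTateZtheta K s θ ((v ᵥ* M) j) :=
  (tateZtheta K s θ).sum_mem fun i _ => mul_mem (hv i) (hM i j)

end TateZtheta

section FixedRing

variable {K : Type} [NontriviallyNormedField K] {s q : ℕ} {θ : K}
  {f : PowerSeries (MvPowerSeries (Fin s) K)}

theorem PowerSeries.map_mvPowerSeriesMap_eq_self_iff {R σ : Type*} [CommSemiring R]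
    (φ : R →+* R) {f : PowerSeries (MvPowerSeries σ R)} :
    PowerSeries.map (MvPowerSeries.map φ) f = f ↔
      ∀ i ν, φ (MvPowerSeries.coeff ν (PowerSeries.coeff i f)) =
        MvPowerSeries.coeff ν (PowerSeries.coeff i f) := by
  refine PowerSeries.ext_iff.trans (forall_congr' fun i => ?_)
  simp [MvPowerSeries.ext_iff, MvPowerSeries.coeff_map]

theorem norm_eq_one_of_pow_eq_self {a : K} (hq : 2 ≤ q) (ha : a ^ q = a) (h0 : a ≠ 0) :
    ‖a‖ = 1 := by
  have : a ^ (q - 1) = 1 := by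
    refine mul_right_cancel₀ h0 ?_
    rw [pow_sub_one_mul (by omega), ha, one_mul]
  exact (isOfFinOrder_iff_pow_eq_one.2 ⟨q - 1, by omega, this⟩).norm_eq_one

theorem twist_eq_self_iff {τ : K ≃+* K} (hτ : ∀ x, τ x = x ^ q) :
    PowerSeries.map (twPS K s (τ.symm : K ≃+* K).toRingHom) f = f ↔
      ∀ i ν, (MvPowerSeries.coeff ν (PowerSeries.coeff i f)) ^ q =
        MvPowerSeries.coeff ν (PowerSeries.coeff i f) := by
  rw [twPS, PowerSeries.map_mvPowerSeriesMap_eq_self_iff]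
  refine forall₂_congr fun i ν => ?_
  rw [RingEquiv.toRingHom_eq_coe, RingEquiv.coe_toRingHom, RingEquiv.symm_apply_eq, hτ, eq_comm]

theorem IsFqPolyZ.isTateZtheta (hf : IsFqPolyZ K s q f) : IsTateZtheta K s θ f := by
  refine .of_finite_support (fun i ε hε => (hf.2.1 i).subset fun ν hν => ?_) hf.1
  intro h
  simp_all [not_le.2 hε]

theorem isFqPolyZ_of_isTateZtheta (hq : 2 ≤ q) (hθ : 1 ≤ ‖θ‖) (hf : IsTateZtheta K s θ f)
    (hfix : ∀ i ν, (MvPowerSeries.coeff ν (PowerSeries.coeff i f)) ^ q =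
      MvPowerSeries.coeff ν (PowerSeries.coeff i f)) : IsFqPolyZ K s q f := by
  have hnorm : ∀ i ν, MvPowerSeries.coeff ν (PowerSeries.coeff i f) ≠ 0 →
      1 ≤ ‖MvPowerSeries.coeff ν (PowerSeries.coeff i f)‖ := fun i ν h0 =>
    (norm_eq_one_of_pow_eq_self hq (hfix i ν) h0).ge
  refine ⟨?_, fun i => (hf.1 i 1 one_pos).subset fun ν => hnorm i ν, hfix⟩
  have hsmall : ∀ᶠ i in cofinite, ‖θ‖ ^ i * gaussNorm K s (PowerSeries.coeff i f) < 1 := by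
    rw [Nat.cofinite_eq_atTop]
    exact hf.2.eventually (gt_mem_nhds one_pos)
  refine (eventually_cofinite.1 hsmall).subset fun i hi => ?_
  obtain ⟨ν, hν⟩ : ∃ ν, MvPowerSeries.coeff ν (PowerSeries.coeff i f) ≠ 0 := by
    by_contra! h
    exact hi (MvPowerSeries.ext h)
  exact not_lt.2 <| (hnorm i ν hν).trans <| ((hf.1 i).norm_coeff_le_gaussNorm ν).trans <|
    le_mul_of_one_le_left (gaussNorm_nonneg _) (one_le_pow₀ hθ)

theorem isFqPolyZ_iff {τ : K ≃+* K} (hq : 2 ≤ q) (hτ : ∀ x, τ x = x ^ q)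
    (hθ : 1 ≤ ‖θ‖) :
    IsFqPolyZ K s q f ↔
      IsTateZtheta K s θ f ∧ PowerSeries.map (twPS K s (τ.symm : K ≃+* K).toRingHom) f = f :=
  ⟨fun hf => ⟨hf.isTateZtheta, (twist_eq_self_iff hτ).2 hf.2.2⟩,
    fun ⟨hf, hfix⟩ => isFqPolyZ_of_isTateZtheta hq hθ hf ((twist_eq_self_iff hτ).1 hfix)⟩

end FixedRing

theorem vecMul_eq_iff_of_map_eq_mul {R n : Type*} [Semiring R] [Fintype n] [DecidableEq n]
    (σ : R →+* R) {Φ Ψ Ψinv : Matrix n n R} (hinv : Ψ * Ψinv = 1)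
    (hΨ : Ψ.map σ = Φ * Ψ) (g : n → R) :
    (σ ∘ g) ᵥ* Φ = g ↔ σ ∘ (g ᵥ* Ψ) = g ᵥ* Ψ := by
  have htwist : σ ∘ (g ᵥ* Ψ) = ((σ ∘ g) ᵥ* Φ) ᵥ* Ψ := by
    ext i
    rw [Function.comp_apply, RingHom.map_vecMul, hΨ, Matrix.vecMul_vecMul]
  have hinj : Function.Injective fun v : n → R => v ᵥ* Ψ := fun x y h => by
    simpa [Matrix.vecMul_vecMul, hinv] using congrArg (· ᵥ* Ψinv) h
  rw [htwist, hinj.eq_iff]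

theorem stmt10_general
    (K : Type) [NontriviallyNormedField K] [IsUltrametricDist K]
    (q : ℕ) (hq : IsPrimePow q)
    (τK : K ≃+* K) (hτK : ∀ x : K, τK x = x ^ q)
    (s : ℕ) (r : ℕ)
    (θ : K) (hθ : ‖θ‖ = q)
    (A : ℕ → MvPowerSeries (Fin s) K)
    (uinv : MvPowerSeries (Fin s) K)
    (Ψ Ψinv : Matrix (Fin r) (Fin r) (PowerSeries (MvPowerSeries (Fin s) K)))
    (hΨT : ∀ i j, IsTateZtheta K s θ (Ψ i j))
    (hΨinvT : ∀ i j, IsTateZtheta K s θ (Ψinv i j))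
    (hinv : Ψ * Ψinv = 1 ∧ Ψinv * Ψ = 1)
    (hΨeq : Ψ.map (PowerSeries.map (twPS K s (τK.symm : K ≃+* K).toRingHom))
      = PhiMatZ K s τK r θ A uinv * Ψ) :
    (∀ g : Fin r → PowerSeries (MvPowerSeries (Fin s) K),
      ((∀ i, IsTateZtheta K s θ (g i)) ∧
        (∀ j : Fin r, ∑ i : Fin r,
          PowerSeries.map (twPS K s (τK.symm : K ≃+* K).toRingHom) (g i)
            * PhiMatZ K s τK r θ A uinv i j = g j))
      ↔ ∃ c : Fin r → PowerSeries (MvPowerSeries (Fin s) K),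
          (∀ i, IsFqPolyZ K s q (c i)) ∧ ∀ j : Fin r, g j = ∑ i : Fin r, c i * Ψinv i j) ∧
    (∀ c : Fin r → PowerSeries (MvPowerSeries (Fin s) K),
      (∀ i, IsFqPolyZ K s q (c i)) →
      (∀ j : Fin r, ∑ i : Fin r, c i * Ψinv i j = 0) → ∀ i, c i = 0) := by
  have hθ1 : 1 ≤ ‖θ‖ := by rw [hθ]; exact_mod_cast hq.one_lt.le
  have hpoly f := isFqPolyZ_iff (s := s) (f := f) hq.two_le hτK hθ1
  set σ := PowerSeries.map (twPS K s (τK.symm : K ≃+* K).toRingHom)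
  have hsol : ∀ g, (∀ j, ∑ i, σ (g i) * PhiMatZ K s τK r θ A uinv i j = g j) ↔
      σ ∘ (g ᵥ* Ψ) = g ᵥ* Ψ :=
    fun g => funext_iff.symm.trans (vecMul_eq_iff_of_map_eq_mul σ hinv.1 hΨeq g)
  refine ⟨fun g => ⟨fun ⟨hg, hgsol⟩ => ?_, ?_⟩, fun c _ hc => ?_⟩
  · have hc j : IsFqPolyZ K s q ((g ᵥ* Ψ) j) :=
      (hpoly _).2 ⟨.vecMul hg hΨT j, congrFun ((hsol g).1 hgsol) j⟩
    refine ⟨g ᵥ* Ψ, hc, fun j => ?_⟩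
    change g j = (g ᵥ* Ψ ᵥ* Ψinv) j
    rw [Matrix.vecMul_vecMul, hinv.1, Matrix.vecMul_one]
  · rintro ⟨c, hc, hgc⟩
    obtain rfl : g = c ᵥ* Ψinv := funext hgc
    refine ⟨.vecMul (fun i => (hc i).isTateZtheta) hΨinvT, (hsol _).2 ?_⟩
    rw [Matrix.vecMul_vecMul, hinv.2, Matrix.vecMul_one]
    exact funext fun i => ((hpoly _).1 (hc i)).2
  · have : c ᵥ* Ψinv ᵥ* Ψ = 0 ᵥ* Ψ := congrArg (· ᵥ* Ψ) (funext hc)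
    rwa [Matrix.vecMul_vecMul, hinv.2, Matrix.vecMul_one, Matrix.zero_vecMul, funext_iff] at this

/-- if `Ψ ∈ GL_r(𝕋_s{z/θ})` satisfies `Ψ^{(-1)} = ΦΨ`, then
`V_φ = {g ∈ Mat_{1×r}(𝕋_s{z/θ}) : g^{(-1)}Φ = g}` equals
`Mat_{1×r}(𝔽_q[t_1,…,t_s,z])·Ψ^{-1}`; in particular `V_φ` is free of rank `r` over
`𝔽_q[t_1,…,t_s,z]` (the rows of `Ψ^{-1}` being a basis). -/
theorem stmt10
    (K : Type) [NontriviallyNormedField K] [IsUltrametricDist K] [CompleteSpace K]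
    (q : ℕ) (hq : IsPrimePow q)
    (τK : K ≃+* K) (hτK : ∀ x : K, τK x = x ^ q)
    (s : ℕ) (r : ℕ) (hr : 0 < r)
    (θ : K) (hθ : ‖θ‖ = q)
    (A : ℕ → MvPowerSeries (Fin s) K) (hA : ∀ k, IsTate K s (A k))
    (uinv : MvPowerSeries (Fin s) K) (huinvT : IsTate K s uinv)
    (huinv : (⇑(twPS K s (τK.symm : K ≃+* K).toRingHom))^[r] (A r) * uinv = 1)
    (Ψ Ψinv : Matrix (Fin r) (Fin r) (PowerSeries (MvPowerSeries (Fin s) K)))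
    (hΨT : ∀ i j, IsTateZtheta K s θ (Ψ i j))
    (hΨinvT : ∀ i j, IsTateZtheta K s θ (Ψinv i j))
    (hinv : Ψ * Ψinv = 1 ∧ Ψinv * Ψ = 1)
    (hΨeq : Ψ.map (PowerSeries.map (twPS K s (τK.symm : K ≃+* K).toRingHom))
      = PhiMatZ K s τK r θ A uinv * Ψ) :
    (∀ g : Fin r → PowerSeries (MvPowerSeries (Fin s) K),
      ((∀ i, IsTateZtheta K s θ (g i)) ∧
        (∀ j : Fin r, ∑ i : Fin r,
          PowerSeries.map (twPS K s (τK.symm : K ≃+* K).toRingHom) (g i)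
            * PhiMatZ K s τK r θ A uinv i j = g j))
      ↔ ∃ c : Fin r → PowerSeries (MvPowerSeries (Fin s) K),
          (∀ i, IsFqPolyZ K s q (c i)) ∧ ∀ j : Fin r, g j = ∑ i : Fin r, c i * Ψinv i j) ∧
    (∀ c : Fin r → PowerSeries (MvPowerSeries (Fin s) K),
      (∀ i, IsFqPolyZ K s q (c i)) →
      (∀ j : Fin r, ∑ i : Fin r, c i * Ψinv i j = 0) → ∀ i, c i = 0) :=
  stmt10_general K q hq τK hτK s r θ hθ A uinv Ψ Ψinv hΨT hΨinvT hinv hΨeq
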